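/- Let l, h > 0 and ψg ∈ ℂ. Suppose ψ : [0,∞) → ℂ is continuous, twice differentiable on (0,h) and on (h,∞), satisfies ψ''(z) = 2i(ψ(z) - ψg) for 0 < z < h and l² ψ''(z) = 2i(ψ(z) - ψg) for z > h, has one-sided derivatives at h with ψ'_-(h) = l² ψ'_+(h), and satisfies ψ(0) = 0 and ψ(z) → ψg as z → ∞. Then ψ(z) = A e^{(1+i)z} + B e^{-(1+i)z} + ψg for 0 ≤ z ≤ h and ψ(z) = D e^{-(1+i)z/l} + ψg for z ≥ h, where, with d = 1 + e^{(2+2i)h} - l + e^{(2+2i)h} l, A = ψg (l-1)/d, B = -ψg e^{(2+2i)h}(l+1)/d, D = -2 ψg e^{(1+i)h + (1+i)h/l}/d. -/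

import Mathlib

/-!
On each layer the equation reads `ψ'' = μ² (ψ - ψg)` with `μ = 1 + i`, resp. `μ = (1 + i) / l`, and
two first-order reductions show that its solutions are exactly `a e^{μz} + b e^{-μz} + ψg`;
continuity of `ψ` carries these representations to the closed layers. Since `Re μ > 0`, the limit
`ψ → ψg` kills the growing mode of the top layer. The conditions `ψ(0) = 0`, continuity at `h` and
flux matching then form a linear system for the three remaining coefficients, whose determinant
`1 + E² - l + E² l` (with `E = e^{(1+i)h}`) is nonzero because `|E²| ≥ 1 > |l - 1| / (l + 1)`.
-/

open Complex Filter Set Topology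

lemma hasDerivAt_cexp_mul_ofReal (μ : ℂ) (z : ℝ) :
    HasDerivAt (fun t : ℝ => exp (μ * t)) (μ * exp (μ * z)) z := by
  simpa [mul_comm] using ((hasDerivAt_id (z : ℂ)).const_mul μ).cexp.comp_ofReal

lemma IsOpen.exists_eq_mul_cexp_of_hasDerivAt {s : Set ℝ} (hs : IsOpen s)
    (hs' : IsPreconnected s) {w : ℝ → ℂ} {κ : ℂ} (hw : ∀ z ∈ s, HasDerivAt w (κ * w z) z) :
    ∃ k, ∀ z ∈ s, w z = k * exp (κ * z) := by
  have hconst : ∀ z ∈ s, HasDerivAt (fun t : ℝ => exp (-κ * t) * w t) 0 z := fun z hz =>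
    ((hasDerivAt_cexp_mul_ofReal (-κ) z).mul (hw z hz)).congr_deriv (by ring)
  obtain ⟨k, hk⟩ := hs.exists_is_const_of_deriv_eq_zero hs'
    (fun z hz => (hconst z hz).differentiableAt.differentiableWithinAt)
    (fun z hz => (hconst z hz).deriv)
  refine ⟨k, fun z hz => ?_⟩
  rw [← hk z hz, mul_comm, ← mul_assoc, ← exp_add]
  simp

lemma hasDerivAt_cexp_combination (a b μ c : ℂ) (z : ℝ) :
    HasDerivAt (fun t : ℝ => a * exp (μ * t) + b * exp (-μ * t) + c)
      (μ * (a * exp (μ * z) - b * exp (-μ * z))) z :=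
  ((((hasDerivAt_cexp_mul_ofReal μ z).const_mul a).add
    ((hasDerivAt_cexp_mul_ofReal (-μ) z).const_mul b)).add_const c).congr_deriv (by ring)

lemma HasDerivWithinAt.eq_of_eqOn_of_hasDerivAt {𝕜 F : Type*} [NontriviallyNormedField 𝕜]
    [NormedAddCommGroup F] [NormedSpace 𝕜 F] {f g : 𝕜 → F} {f' g' : F} {s : Set 𝕜} {x : 𝕜}
    (hf : HasDerivWithinAt f f' s x) (hg : HasDerivAt g g' x) (hfg : EqOn f g s) (hx : x ∈ s)
    (hs : UniqueDiffWithinAt 𝕜 s x) : f' = g' :=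
  hs.eq_deriv _ hf (hg.hasDerivWithinAt.congr hfg (hfg hx))

lemma IsOpen.exists_eq_cexp_combination {s : Set ℝ} (hs : IsOpen s) (hs' : IsPreconnected s)
    {μ c : ℂ} (hμ : μ ≠ 0) {f f' f'' : ℝ → ℂ} (hf : ∀ z ∈ s, HasDerivAt f (f' z) z)
    (hf' : ∀ z ∈ s, HasDerivAt f' (f'' z) z) (hode : ∀ z ∈ s, f'' z = μ ^ 2 * (f z - c)) :
    ∃ a b : ℂ, ∀ z ∈ s, f z = a * exp (μ * z) + b * exp (-μ * z) + c := by
  -- `f' - μ (f - c)` solves `w' = -μ w`, and then `f - c + k / (2μ) e^{-μz}` solves `v' = μ v`.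
  obtain ⟨k, hk⟩ := hs.exists_eq_mul_cexp_of_hasDerivAt hs'
    (w := fun z => f' z - μ * (f z - c)) (κ := -μ) fun z hz =>
      ((hf' z hz).sub (((hf z hz).sub_const c).const_mul μ)).congr_deriv
        (by rw [hode z hz]; ring)
  obtain ⟨a, ha⟩ := hs.exists_eq_mul_cexp_of_hasDerivAt hs'
    (w := fun z => f z - c + k / (2 * μ) * exp (-μ * z)) (κ := μ) fun z hz =>
      (((hf z hz).sub_const c).add ((hasDerivAt_cexp_mul_ofReal (-μ) z).const_mul _)).congr_deriv
        (by
          have hkz := hk z hz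
          simp only [neg_mul] at hkz ⊢
          field_simp
          linear_combination 2 * hkz)
  exact ⟨a, -k / (2 * μ), fun z hz => by linear_combination ha z hz⟩

lemma exists_eq_cexp_combination_of_subset_closure {s t : Set ℝ} (hs : IsOpen s)
    (hs' : IsPreconnected s) (hst : s ⊆ t) (hts : t ⊆ closure s) {μ c : ℂ} (hμ : μ ≠ 0)
    {f f' f'' : ℝ → ℂ} (hcont : ContinuousOn f t) (hf : ∀ z ∈ s, HasDerivAt f (f' z) z)
    (hf' : ∀ z ∈ s, HasDerivAt f' (f'' z) z) (hode : ∀ z ∈ s, f'' z = μ ^ 2 * (f z - c)) :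
    ∃ a b : ℂ, ∀ z ∈ t, f z = a * exp (μ * z) + b * exp (-μ * z) + c := by
  obtain ⟨a, b, hab⟩ := hs.exists_eq_cexp_combination hs' hμ hf hf' hode
  exact ⟨a, b, EqOn.of_subset_closure hab hcont (by fun_prop) hst hts⟩

lemma eq_zero_of_tendsto_cexp_combination {ν a b : ℂ} (hν : 0 < ν.re)
    (h : Tendsto (fun z : ℝ => a * exp (ν * z) + b * exp (-ν * z)) atTop (𝓝 0)) : a = 0 := by
  have hdecay : Tendsto (fun z : ℝ => exp (-ν * z)) atTop (𝓝 0) := by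
    rw [tendsto_exp_nhds_zero_iff]
    simpa using tendsto_id.const_mul_atTop_of_neg (neg_neg_of_pos hν)
  have hlim : Tendsto (fun z : ℝ => exp (-ν * z) * (a * exp (ν * z) + b * exp (-ν * z))
      - b * exp (-ν * z) ^ 2) atTop (𝓝 0) := by
    simpa using (hdecay.mul h).sub ((hdecay.pow 2).const_mul b)
  refine tendsto_nhds_unique (tendsto_const_nhds.congr fun z => ?_) hlim
  have hinv : exp (-ν * z) * exp (ν * z) = 1 := by rw [← exp_add]; simp
  linear_combination -a * hinv

lemma exists_eq_mul_cexp_neg_of_tendsto {μ c : ℂ} (hμ : 0 < μ.re) {x : ℝ} {f f' f'' : ℝ → ℂ}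
    (hcont : ContinuousOn f (Ici x)) (hf : ∀ z ∈ Ioi x, HasDerivAt f (f' z) z)
    (hf' : ∀ z ∈ Ioi x, HasDerivAt f' (f'' z) z) (hode : ∀ z ∈ Ioi x, f'' z = μ ^ 2 * (f z - c))
    (hlim : Tendsto f atTop (𝓝 c)) :
    ∃ d : ℂ, ∀ z ∈ Ici x, f z = d * exp (-μ * z) + c := by
  obtain ⟨a, d, had⟩ := exists_eq_cexp_combination_of_subset_closure isOpen_Ioi
    isPreconnected_Ioi Ioi_subset_Ici_self (closure_Ioi x).ge
    (fun hμ0 => hμ.ne' (by simp [hμ0])) hcont hf hf' hode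
  obtain rfl : a = 0 := eq_zero_of_tendsto_cexp_combination (b := d) hμ
    ((tendsto_sub_nhds_zero_iff.2 hlim).congr' <| (eventually_gt_atTop x).mono
      fun z hz => by rw [had z hz.le]; ring)
  exact ⟨d, fun z hz => by rw [had z hz]; ring⟩

lemma one_add_sub_add_mul_ne_zero {w : ℂ} {l : ℝ} (hw : 1 ≤ ‖w‖) (hl : 0 < l) :
    1 + w - l + w * l ≠ 0 := by
  intro h
  have hw' : w * ((1 + l : ℝ) : ℂ) = ((l - 1 : ℝ) : ℂ) := by push_cast; linear_combination h
  have hnorm : ‖w‖ * (1 + l) = |l - 1| := by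
    simpa only [norm_mul, Complex.norm_real, Real.norm_eq_abs,
      abs_of_pos (by linarith : 0 < 1 + l)] using congrArg norm hw'
  have hlt : |l - 1| < 1 + l := abs_sub_lt_iff.2 ⟨by linarith, by linarith⟩
  nlinarith

lemma coefficients_eq_of_junction {l a b d ψg E G : ℂ} (hE : E ≠ 0) (hG : G ≠ 0)
    (hD : 1 + E ^ 2 - l + E ^ 2 * l ≠ 0) (hbot : a + b + ψg = 0)
    (hjump : a * E + b * E⁻¹ = d * G⁻¹) (hflux : a * E - b * E⁻¹ = -l * (d * G⁻¹)) :
    a = ψg * (l - 1) / (1 + E ^ 2 - l + E ^ 2 * l) ∧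
    b = -(ψg * E ^ 2 * (l + 1)) / (1 + E ^ 2 - l + E ^ 2 * l) ∧
    d = -(2 * ψg * (E * G)) / (1 + E ^ 2 - l + E ^ 2 * l) := by
  have hEinv : E * E⁻¹ = 1 := mul_inv_cancel₀ hE
  have hGinv : G * G⁻¹ = 1 := mul_inv_cancel₀ hG
  have hq : d * G⁻¹ * (1 + E ^ 2 - l + E ^ 2 * l) = -2 * ψg * E := by
    linear_combination 2 * E * hbot - (hjump + hflux) - E ^ 2 * (hjump - hflux) + 2 * b * E * hEinv
  refine ⟨?_, ?_, ?_⟩ <;> rw [eq_div_iff hD]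
  · refine mul_left_cancel₀ hE ?_
    linear_combination (1 + E ^ 2 - l + E ^ 2 * l) / 2 * (hjump + hflux) + (1 - l) / 2 * hq
  · linear_combination -b * (1 + E ^ 2 - l + E ^ 2 * l) * hEinv
      + E * (1 + E ^ 2 - l + E ^ 2 * l) / 2 * (hjump - hflux) + E * (1 + l) / 2 * hq
  · linear_combination G * hq - d * (1 + E ^ 2 - l + E ^ 2 * l) * hGinv

theorem one_jump_solution_uniqueness (l h : ℝ) (hl : 0 < l) (hh : 0 < h) (ψg : ℂ)
    (ψ ψ' ψ'' : ℝ → ℂ) (dm dp : ℂ)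
    (hcont : ContinuousOn ψ (Set.Ici (0 : ℝ)))
    (hd1low : ∀ z ∈ Set.Ioo (0 : ℝ) h, HasDerivAt ψ (ψ' z) z)
    (hd2low : ∀ z ∈ Set.Ioo (0 : ℝ) h, HasDerivAt ψ' (ψ'' z) z)
    (hd1high : ∀ z ∈ Set.Ioi h, HasDerivAt ψ (ψ' z) z)
    (hd2high : ∀ z ∈ Set.Ioi h, HasDerivAt ψ' (ψ'' z) z)
    (hodelow : ∀ z ∈ Set.Ioo (0 : ℝ) h, ψ'' z = 2 * Complex.I * (ψ z - ψg))
    (hodehigh : ∀ z ∈ Set.Ioi h, (l : ℂ) ^ 2 * ψ'' z = 2 * Complex.I * (ψ z - ψg))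
    (hdm : HasDerivWithinAt ψ dm (Set.Icc 0 h) h)
    (hdp : HasDerivWithinAt ψ dp (Set.Ici h) h)
    (hflux : dm = (l : ℂ) ^ 2 * dp)
    (h0 : ψ 0 = 0)
    (hlim : Filter.Tendsto ψ Filter.atTop (nhds ψg)) :
    (∀ z ∈ Set.Icc (0 : ℝ) h,
      ψ z = ψg * ((l : ℂ) - 1)
              / (1 + Complex.exp ((2 + 2 * Complex.I) * h) - l
                  + Complex.exp ((2 + 2 * Complex.I) * h) * l)
            * Complex.exp ((1 + Complex.I) * z)
          + (-(ψg * Complex.exp ((2 + 2 * Complex.I) * h) * ((l : ℂ) + 1))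
              / (1 + Complex.exp ((2 + 2 * Complex.I) * h) - l
                  + Complex.exp ((2 + 2 * Complex.I) * h) * l))
            * Complex.exp (-(1 + Complex.I) * z)
          + ψg) ∧
    (∀ z ∈ Set.Ici h,
      ψ z = (-(2 * ψg * Complex.exp ((1 + Complex.I) * h + (1 + Complex.I) * h / l))
              / (1 + Complex.exp ((2 + 2 * Complex.I) * h) - l
                  + Complex.exp ((2 + 2 * Complex.I) * h) * l))
            * Complex.exp (-(1 + Complex.I) * z / l)
          + ψg) := by
  have hμ : (1 + I : ℂ) ≠ 0 := by simp [Complex.ext_iff]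
  have hμsq : (1 + I : ℂ) ^ 2 = 2 * I := by linear_combination I_sq
  have hl0 : (l : ℂ) ≠ 0 := by exact_mod_cast hl.ne'
  have hhIcc : h ∈ Icc 0 h := ⟨hh.le, le_rfl⟩
  obtain ⟨a, b, hlow⟩ := exists_eq_cexp_combination_of_subset_closure (c := ψg) isOpen_Ioo
    isPreconnected_Ioo Ioo_subset_Icc_self (closure_Ioo hh.ne).ge hμ
    (hcont.mono Icc_subset_Ici_self) hd1low hd2low fun z hz => by rw [hμsq, hodelow z hz]
  obtain ⟨d, hhigh⟩ := exists_eq_mul_cexp_neg_of_tendsto (μ := (1 + I) / l)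
    (by rw [div_ofReal_re]; simpa using hl) (hcont.mono (Ici_subset_Ici.2 hh.le)) hd1high hd2high
    (fun z hz => by rw [div_pow, hμsq]; field_simp; linear_combination hodehigh z hz) hlim
  have hdm' := hdm.eq_of_eqOn_of_hasDerivAt (hasDerivAt_cexp_combination _ _ _ _ h) hlow hhIcc
    (uniqueDiffOn_Icc hh h hhIcc)
  have hdp' := hdp.eq_of_eqOn_of_hasDerivAt
    (((hasDerivAt_cexp_mul_ofReal _ h).const_mul d).add_const ψg) hhigh self_mem_Ici
    (uniqueDiffOn_Ici h h self_mem_Ici)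
  have hψh := (hlow h hhIcc).symm.trans (hhigh h self_mem_Ici)
  simp only [neg_mul, exp_neg] at hψh hdm' hdp'
  set E := exp ((1 + I) * h)
  set G := exp ((1 + I) / l * h)
  have hbot : a + b + ψg = 0 := by simpa using (hlow 0 ⟨le_rfl, hh.le⟩).symm.trans h0
  have hjump : a * E + b * E⁻¹ = d * G⁻¹ := by linear_combination hψh
  have hflux' : a * E - b * E⁻¹ = -l * (d * G⁻¹) := by
    refine mul_left_cancel₀ hμ ?_
    rw [hdm', hdp'] at hflux
    linear_combination hflux - (1 + I) * l * d * G⁻¹ * mul_inv_cancel₀ hl0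
  have hE2 : exp ((2 + 2 * I) * h) = E ^ 2 := by rw [← exp_nat_mul]; push_cast; ring_nf
  have hEG : exp ((1 + I) * h + (1 + I) * h / l) = E * G := by rw [← exp_add]; ring_nf
  have hD := one_add_sub_add_mul_ne_zero (w := exp ((2 + 2 * I) * h))
    (by rw [norm_exp]; simpa using hh.le) hl
  rw [hE2] at hD ⊢
  obtain ⟨rfl, rfl, rfl⟩ :=
    coefficients_eq_of_junction (exp_ne_zero _) (exp_ne_zero _) hD hbot hjump hflux'
  refine ⟨fun z hz => by rw [hlow z hz], fun z hz => ?_⟩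
  rw [hhigh z hz, hEG, show -((1 + I) / l) * (z : ℂ) = -(1 + I) * z / l by ring]
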